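/- arXiv:2211.01755 — 5 statements merged into one kernel-verified Lean document; each statement's English description precedes it below -/
import Mathlib

section
/- Let H be a self-adjoint operator on a Hilbert space, bounded above, with Tr(e^A) < ∞ for A = -βH, and let B be a bounded self-adjoint operator. Then Tr(e^A B)/Tr(e^A) ≤ log( Tr(e^{A+B}) / Tr(e^A) ). (Peierls–Bogolyubov inequality, trace form.) -/
/-!
Diagonalise `A = U diag(a) U*` and put `bᵢ = Re (U* B U)ᵢᵢ`, so that `Tr(e^A B) = ∑ e^{aᵢ} bᵢ`.
Jensen's inequality for `exp` with the Gibbs weights `e^{aᵢ} / ∑ⱼ e^{aⱼ}` gives the inequality with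
`∑ e^{aᵢ + bᵢ}` in place of `Tr e^{A+B}`. The numbers `aᵢ + bᵢ` are the diagonal entries of `A + B`
in the eigenbasis of `A`, so they arise from the eigenvalues of `A + B` through the doubly
stochastic matrix `|(U* V)ᵢⱼ|²`, `V` an eigenbasis of `A + B`; convexity of `exp` then gives
Peierls' inequality `∑ e^{aᵢ + bᵢ} ≤ Tr e^{A+B}`.
-/

open Matrix Finset

lemma Real.sum_exp_mul_div_le_log {ι : Type*} [Fintype ι] [Nonempty ι] (a b : ι → ℝ) :
    (∑ i, Real.exp (a i) * b i) / ∑ i, Real.exp (a i) ≤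
      Real.log ((∑ i, Real.exp (a i + b i)) / ∑ i, Real.exp (a i)) := by
  set Z := ∑ i, Real.exp (a i)
  have hZ : 0 < Z := sum_pos (fun i _ => Real.exp_pos _) univ_nonempty
  have jensen := convexOn_exp.map_sum_le (t := univ) (w := fun i => Real.exp (a i) / Z) (p := b)
    (fun i _ => by positivity) (by rw [← sum_div, div_self hZ.ne']) (fun i _ => Set.mem_univ _)
  rw [Real.le_log_iff_exp_le (by positivity)]
  simpa only [smul_eq_mul, div_mul_eq_mul_div, ← sum_div, ← Real.exp_add] using jensen

namespace Matrix

variable {ι : Type*} [Fintype ι] [DecidableEq ι]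

lemma sum_map_mulVec_le_of_mem_doublyStochastic {M : Matrix ι ι ℝ}
    (hM : M ∈ doublyStochastic ℝ ι) {s : Set ℝ} {f : ℝ → ℝ} (hf : ConvexOn ℝ s f) {x : ι → ℝ}
    (hx : ∀ i, x i ∈ s) :
    ∑ i, f ((M *ᵥ x) i) ≤ ∑ i, f (x i) :=
  calc ∑ i, f ((M *ᵥ x) i) ≤ ∑ i, ∑ j, M i j * f (x j) :=
        sum_le_sum fun i _ => hf.map_sum_le (fun j _ => nonneg_of_mem_doublyStochastic hM)
          (sum_row_of_mem_doublyStochastic hM i) (fun j _ => hx j)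
    _ = ∑ j, f (x j) := by
        rw [sum_comm]
        simp only [← sum_mul, sum_col_of_mem_doublyStochastic hM, one_mul]

lemma normSq_mem_doublyStochastic {W : Matrix ι ι ℂ} (hW : W ∈ unitaryGroup ι ℂ) :
    of (fun i j => Complex.normSq (W i j)) ∈ doublyStochastic ℝ ι := by
  rw [mem_doublyStochastic_iff_sum]
  refine ⟨fun i j => Complex.normSq_nonneg _, fun i => ?_, fun j => ?_⟩
  · have h := congrFun₂ (mem_unitaryGroup_iff.mp hW) i i
    simp only [mul_apply, star_apply, one_apply_eq, Complex.star_def, Complex.mul_conj] at h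
    exact_mod_cast h
  · have h := congrFun₂ (mem_unitaryGroup_iff'.mp hW) j j
    simp only [mul_apply, star_apply, one_apply_eq, Complex.star_def,
      mul_comm (starRingEnd ℂ _), Complex.mul_conj] at h
    exact_mod_cast h

namespace IsHermitian

lemma re_diag_conj_eq_mulVec {C : Matrix ι ι ℂ} (hC : C.IsHermitian) (U : Matrix ι ι ℂ)
    (i : ι) :
    ((star U * C * U) i i).re =
      (of (fun i j => Complex.normSq ((star U * hC.eigenvectorUnitary) i j)) *ᵥ
        hC.eigenvalues) i := by
  set W := star U * (hC.eigenvectorUnitary : Matrix ι ι ℂ)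
  have hC' : star U * C * U = W * diagonal (fun j => (hC.eigenvalues j : ℂ)) * star W := by
    conv_lhs => rw [hC.spectral_theorem]
    simp only [W, Unitary.conjStarAlgAut_apply, star_mul, star_star, Matrix.mul_assoc]
    rfl
  rw [hC', mul_apply, Complex.re_sum]
  refine sum_congr rfl fun j _ => ?_
  rw [mul_diagonal, star_apply, RCLike.star_def, mul_right_comm, Complex.mul_conj,
    ← Complex.ofReal_mul, Complex.ofReal_re]
  rfl

lemma sum_map_re_diag_conj_le {C : Matrix ι ι ℂ} (hC : C.IsHermitian) {U : Matrix ι ι ℂ}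
    (hU : U ∈ unitaryGroup ι ℂ) {f : ℝ → ℝ} (hf : ConvexOn ℝ Set.univ f) :
    ∑ i, f ((star U * C * U) i i).re ≤ ∑ i, f (hC.eigenvalues i) := by
  simp only [hC.re_diag_conj_eq_mulVec U]
  exact sum_map_mulVec_le_of_mem_doublyStochastic
    (normSq_mem_doublyStochastic (mul_mem (Unitary.star_mem hU) hC.eigenvectorUnitary.2)) hf
    fun _ => Set.mem_univ _

lemma exp_eq_conj_diagonal {A : Matrix ι ι ℂ} (hA : A.IsHermitian) :
    NormedSpace.exp A = (hA.eigenvectorUnitary : Matrix ι ι ℂ) *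
      diagonal (fun i => (Real.exp (hA.eigenvalues i) : ℂ)) *
        star (hA.eigenvectorUnitary : Matrix ι ι ℂ) := by
  set U := (hA.eigenvectorUnitary : Matrix ι ι ℂ)
  have hUinv : U⁻¹ = star U :=
    inv_eq_right_inv (mem_unitaryGroup_iff.mp hA.eigenvectorUnitary.2)
  conv_lhs => rw [hA.spectral_theorem, Unitary.conjStarAlgAut_apply, ← hUinv,
    exp_conj U _ ⟨Unitary.toUnits hA.eigenvectorUnitary, rfl⟩, exp_diagonal, hUinv]
  congr 2
  ext i
  simp [Pi.exp_def, ← Complex.exp_eq_exp_ℂ, ← Complex.ofReal_exp]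

lemma re_trace_exp_mul {A : Matrix ι ι ℂ} (hA : A.IsHermitian) (B : Matrix ι ι ℂ) :
    (trace (NormedSpace.exp A * B)).re = ∑ i, Real.exp (hA.eigenvalues i) *
      ((star (hA.eigenvectorUnitary : Matrix ι ι ℂ) * B * hA.eigenvectorUnitary) i i).re := by
  rw [hA.exp_eq_conj_diagonal, Matrix.mul_assoc, Matrix.mul_assoc, trace_mul_comm,
    Matrix.mul_assoc, trace, Complex.re_sum]
  simp only [diag_apply, diagonal_mul, Complex.re_ofReal_mul]

lemma re_trace_exp {A : Matrix ι ι ℂ} (hA : A.IsHermitian) :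
    (trace (NormedSpace.exp A)).re = ∑ i, Real.exp (hA.eigenvalues i) := by
  simpa using hA.re_trace_exp_mul 1

lemma sum_exp_re_diag_conj_le_re_trace_exp {C : Matrix ι ι ℂ} (hC : C.IsHermitian)
    {U : Matrix ι ι ℂ} (hU : U ∈ unitaryGroup ι ℂ) :
    ∑ i, Real.exp ((star U * C * U) i i).re ≤ (trace (NormedSpace.exp C)).re :=
  hC.re_trace_exp ▸ hC.sum_map_re_diag_conj_le hU convexOn_exp

lemma re_diag_conj_add {A : Matrix ι ι ℂ} (hA : A.IsHermitian) (B : Matrix ι ι ℂ) (i : ι) :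
    ((star (hA.eigenvectorUnitary : Matrix ι ι ℂ) * (A + B) * hA.eigenvectorUnitary) i i).re =
      hA.eigenvalues i +
        ((star (hA.eigenvectorUnitary : Matrix ι ι ℂ) * B * hA.eigenvectorUnitary) i i).re := by
  have h := hA.conjStarAlgAut_star_eigenvectorUnitary
  simp only [Unitary.conjStarAlgAut_apply, Unitary.coe_star, star_star] at h
  rw [Matrix.mul_add, Matrix.add_mul, add_apply, h]
  simp

end IsHermitian

end Matrix

theorem peierls_bogolyubov_general {n : ℕ}
    (A B : Matrix (Fin n) (Fin n) ℂ) (hA : A.IsHermitian) (hB : B.IsHermitian) :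
    (Matrix.trace (NormedSpace.exp A * B)).re / (Matrix.trace (NormedSpace.exp A)).re ≤
      Real.log ((Matrix.trace (NormedSpace.exp (A + B))).re /
        (Matrix.trace (NormedSpace.exp A)).re) := by
  rcases isEmpty_or_nonempty (Fin n) with _ | _
  · simp
  set U := (hA.eigenvectorUnitary : Matrix (Fin n) (Fin n) ℂ)
  have peierls : ∑ i, Real.exp (hA.eigenvalues i + ((star U * B * U) i i).re) ≤
      (trace (NormedSpace.exp (A + B))).re := by
    simpa only [hA.re_diag_conj_add] using
      (hA.add hB).sum_exp_re_diag_conj_le_re_trace_exp hA.eigenvectorUnitary.2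
  rw [hA.re_trace_exp_mul, hA.re_trace_exp]
  exact (Real.sum_exp_mul_div_le_log _ _).trans (Real.log_le_log (by positivity) (by gcongr))

/-- **Peierls–Bogolyubov inequality** (trace form), formalized for Hermitian
matrices on a finite-dimensional Hilbert space `ℂ^n` (where every self-adjoint
operator bounded above with trace-class exponential is of this form):
`Tr(e^A B)/Tr(e^A) ≤ log (Tr(e^{A+B})/Tr(e^A))` for `A` self-adjoint
(here `A = -βH`) and `B` bounded self-adjoint. -/
theorem peierls_bogolyubov {n : ℕ} (hn : 0 < n)
    (A B : Matrix (Fin n) (Fin n) ℂ) (hA : A.IsHermitian) (hB : B.IsHermitian) :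
    (Matrix.trace (NormedSpace.exp A * B)).re / (Matrix.trace (NormedSpace.exp A)).re ≤
      Real.log ((Matrix.trace (NormedSpace.exp (A + B))).re /
        (Matrix.trace (NormedSpace.exp A)).re) :=
  peierls_bogolyubov_general A B hA hB
end

section
/- Fix Hermitian matrices H, A on ℂ^n and β > 0. The function t ↦ -(1/β) log Tr(e^{-β(H + tA)}) is concave on ℝ. -/
/-!
For Hermitian `M, B` the function `F t = log Tr e^{M + tB}` has a supporting line at every point,
by the Peierls–Bogoliubov inequality `log Tr e^N ≥ log Tr e^M + Tr (e^M (N - M)) / Tr e^M`.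
After conjugating `M` to the diagonal matrix of its eigenvalues `m`, this is Jensen's inequality
twice: for the Gibbs weights `e^{m_i} / Tr e^M`, and in the Peierls inequality
`∑ i, f (N i i) ≤ Tr f(N)` for convex `f`, which holds because each diagonal entry of `N` is a
convex combination of its eigenvalues. The free energy is `-F / β` with `M = -βH`, `B = -βA`.
-/

open Matrix Unitary

namespace Real

variable {ι : Type*} [Fintype ι] [Nonempty ι]

theorem log_sum_exp_add_div_le_log_sum_exp (m a : ι → ℝ) :
    log (∑ i, exp (m i)) + (∑ i, exp (m i) * (a i - m i)) / ∑ i, exp (m i) ≤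
      log (∑ i, exp (a i)) := by
  set Z := ∑ i, exp (m i)
  have hZ : 0 < Z := Finset.sum_pos (fun i _ => exp_pos _) Finset.univ_nonempty
  have hjensen : exp (∑ i, exp (m i) / Z * (a i - m i)) ≤ ∑ i, exp (m i) / Z * exp (a i - m i) :=
    convexOn_exp.map_sum_le (fun i _ => by positivity)
      (by rw [← Finset.sum_div, div_self hZ.ne']) (fun i _ => Set.mem_univ _)
  have hmean : ∑ i, exp (m i) / Z * (a i - m i) = (∑ i, exp (m i) * (a i - m i)) / Z := by
    rw [Finset.sum_div]; exact Finset.sum_congr rfl fun i _ => div_mul_eq_mul_div _ _ _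
  have hsum : ∑ i, exp (m i) / Z * exp (a i - m i) = (∑ i, exp (a i)) / Z := by
    rw [Finset.sum_div]
    refine Finset.sum_congr rfl fun i _ => ?_
    rw [exp_sub]; field_simp
  rw [hmean, hsum, ← le_log_iff_exp_le (by positivity), log_div (by positivity) hZ.ne'] at hjensen
  linarith

end Real

theorem convexOn_univ_of_forall_add_mul_sub_le {f g : ℝ → ℝ}
    (h : ∀ x y, f x + g x * (y - x) ≤ f y) : ConvexOn ℝ Set.univ f := by
  refine ⟨convex_univ, fun x _ y _ a b ha hb hab => ?_⟩
  set z := a • x + b • y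
  calc f z = a * (f z + g z * (x - z)) + b * (f z + g z * (y - z)) := by
        simp only [z, smul_eq_mul]; linear_combination (g z * (a * x + b * y) - f z) * hab
    _ ≤ a • f x + b • f y := add_le_add (mul_le_mul_of_nonneg_left (h z x) ha)
        (mul_le_mul_of_nonneg_left (h z y) hb)

namespace Matrix

variable {ι : Type*} [Fintype ι] [DecidableEq ι]

theorem sum_normSq_apply_eq_one (u : unitary (Matrix ι ι ℂ)) (i : ι) :
    ∑ j, Complex.normSq ((u : Matrix ι ι ℂ) i j) = 1 := by
  have h := congrFun (congrFun (Unitary.coe_mul_star_self u) i) i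
  rw [mul_apply, one_apply_eq] at h
  exact_mod_cast (Finset.sum_congr rfl fun j _ => Complex.mul_conj _).symm.trans h

theorem re_conjStarAlgAut_diagonal_apply_self (u : unitary (Matrix ι ι ℂ)) (d : ι → ℝ) (i : ι) :
    (conjStarAlgAut ℂ _ u (diagonal (RCLike.ofReal ∘ d)) i i).re =
      ∑ j, Complex.normSq ((u : Matrix ι ι ℂ) i j) * d j := by
  rw [conjStarAlgAut_apply, mul_apply, Complex.re_sum]
  refine Finset.sum_congr rfl fun j _ => ?_
  rw [mul_diagonal, star_apply, Complex.star_def, mul_right_comm, Complex.mul_conj]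
  simp

theorem exp_conjStarAlgAut (u : unitary (Matrix ι ι ℂ)) (X : Matrix ι ι ℂ) :
    NormedSpace.exp (conjStarAlgAut ℂ _ u X) = conjStarAlgAut ℂ _ u (NormedSpace.exp X) := by
  simpa using exp_units_conj (Unitary.toUnits u) X

theorem trace_conjStarAlgAut (u : unitary (Matrix ι ι ℂ)) (X : Matrix ι ι ℂ) :
    trace (conjStarAlgAut ℂ _ u X) = trace X := by
  simpa using trace_units_conj (Unitary.toUnits u) X

namespace IsHermitian

variable {M N : Matrix ι ι ℂ}

theorem map_re_apply_self_le_re_cfc_apply_self (hN : N.IsHermitian) {f : ℝ → ℝ}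
    (hf : ConvexOn ℝ Set.univ f) (i : ι) : f (N i i).re ≤ (cfc f N i i).re := by
  set u := hN.eigenvectorUnitary
  have hNii : (N i i).re = ∑ j, Complex.normSq ((u : Matrix ι ι ℂ) i j) * hN.eigenvalues j := by
    conv_lhs => rw [hN.spectral_theorem]
    exact re_conjStarAlgAut_diagonal_apply_self u _ i
  rw [hN.cfc_eq, IsHermitian.cfc, re_conjStarAlgAut_diagonal_apply_self, hNii]
  exact hf.map_sum_le (fun j _ => Complex.normSq_nonneg _) (sum_normSq_apply_eq_one u i)
    (fun j _ => Set.mem_univ _)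

theorem sum_exp_re_apply_self_le_re_trace_exp (hN : N.IsHermitian) :
    ∑ i, Real.exp (N i i).re ≤ (trace (NormedSpace.exp N)).re := by
  open scoped Matrix.Norms.L2Operator in
  rw [← CFC.real_exp_eq_normedSpace_exp hN.isSelfAdjoint, trace, Complex.re_sum]
  exact Finset.sum_le_sum fun i _ => hN.map_re_apply_self_le_re_cfc_apply_self convexOn_exp i

theorem log_trace_exp_add_le_of_eq_diagonal [Nonempty ι] {m : ι → ℝ}
    (hM : M = diagonal (RCLike.ofReal ∘ m)) (hN : N.IsHermitian) :
    Real.log (trace (NormedSpace.exp M)).re +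
        (trace (NormedSpace.exp M * (N - M))).re / (trace (NormedSpace.exp M)).re ≤
      Real.log (trace (NormedSpace.exp N)).re := by
  have hexp : NormedSpace.exp M = diagonal fun i => (Real.exp (m i) : ℂ) := by
    simp [hM, exp_diagonal, Pi.exp_def, ← Complex.exp_eq_exp_ℂ, Complex.ofReal_exp]
  have hZ : (trace (NormedSpace.exp M)).re = ∑ i, Real.exp (m i) := by
    simp only [hexp, trace_diagonal, Complex.re_sum, Complex.ofReal_re]
  have hE : (trace (NormedSpace.exp M * (N - M))).re =
      ∑ i, Real.exp (m i) * ((N i i).re - m i) := by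
    rw [hexp, hM]
    simp [trace, diagonal_mul, Complex.re_sum, -Complex.ofReal_exp]
  calc _ ≤ Real.log (∑ i, Real.exp (N i i).re) := by
        rw [hZ, hE]; exact Real.log_sum_exp_add_div_le_log_sum_exp m _
    _ ≤ _ := Real.log_le_log (by positivity) hN.sum_exp_re_apply_self_le_re_trace_exp

theorem log_trace_exp_add_le [Nonempty ι] (hM : M.IsHermitian) (hN : N.IsHermitian) :
    Real.log (trace (NormedSpace.exp M)).re +
        (trace (NormedSpace.exp M * (N - M))).re / (trace (NormedSpace.exp M)).re ≤
      Real.log (trace (NormedSpace.exp N)).re := by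
  have h := log_trace_exp_add_le_of_eq_diagonal hM.conjStarAlgAut_star_eigenvectorUnitary
    (hN.isSelfAdjoint.map (conjStarAlgAut ℂ _ (star hM.eigenvectorUnitary)))
  simpa only [exp_conjStarAlgAut, ← map_sub, ← map_mul, trace_conjStarAlgAut] using h

end IsHermitian

theorem convexOn_log_trace_exp_add_smul {M B : Matrix ι ι ℂ} (hM : M.IsHermitian)
    (hB : B.IsHermitian) :
    ConvexOn ℝ Set.univ fun t : ℝ => Real.log (trace (NormedSpace.exp (M + (t : ℂ) • B))).re := by
  rcases isEmpty_or_nonempty ι with hι | hι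
  · simpa [trace] using convexOn_const 0 convex_univ
  set X : ℝ → Matrix ι ι ℂ := fun t => M + (t : ℂ) • B
  have hX (t : ℝ) : (X t).IsHermitian := hM.add (hB.smul (Complex.conj_ofReal t))
  refine convexOn_univ_of_forall_add_mul_sub_le (g := fun t =>
    (trace (NormedSpace.exp (X t) * B)).re / (trace (NormedSpace.exp (X t))).re) fun t s => ?_
  have hsub : X s - X t = ((s - t : ℝ) : ℂ) • B := by simp only [X]; push_cast; module
  have h := (hX t).log_trace_exp_add_le (hX s)
  rwa [hsub, mul_smul_comm, trace_smul, smul_eq_mul, Complex.re_ofReal_mul, mul_div_assoc,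
    mul_comm (s - t)] at h

end Matrix

/-- The free energy `t ↦ -(1/β) log Tr(e^{-β(H+tA)})` is concave on `ℝ`,
for Hermitian matrices `H, A` on `ℂ^n` and `β > 0`. -/
theorem free_energy_concave {n : ℕ} (β : ℝ) (hβ : 0 < β)
    (H A : Matrix (Fin n) (Fin n) ℂ) (hH : H.IsHermitian) (hA : A.IsHermitian) :
    ConcaveOn ℝ Set.univ (fun t : ℝ =>
      -(1 / β) * Real.log
        ((Matrix.trace (NormedSpace.exp ((-β : ℂ) • (H + (t : ℂ) • A)))).re)) := by
  have hβ_self : IsSelfAdjoint (-β : ℂ) :=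
    (show IsSelfAdjoint (β : ℂ) from Complex.conj_ofReal β).neg
  have h := convexOn_log_trace_exp_add_smul (hH.smul hβ_self) (hA.smul hβ_self)
  refine (h.smul (one_div_nonneg.2 hβ.le)).neg.congr fun t _ => ?_
  simp [smul_add, smul_comm t β]
end

section
/- Fix a Hermitian matrix H and a Hermitian matrix A on ℂ^n and β > 0. Let F(t) = -(1/β) log Tr(e^{-β(H+tA)}) and let ω^β(A) = Tr(e^{-βH} A)/Tr(e^{-βH}) be the Gibbs state expectation. Then for all t > 0: (F(0) - F(-t))/t ≥ ω^β(A) ≥ (F(t) - F(0))/t. -/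
/-!
Diagonalize `B = U D U*` with `D = diag μ`, and let `c i` be the diagonal entries of `U* C U`.
In that basis the diagonal entries of `B + C` are `μ i + c i`, and Peierls' inequality (Jensen
for `exp` on each diagonal entry of a Hermitian matrix, with weights `‖U i j‖²` from its
eigenbasis) gives `Tr e^{B+C} ≥ ∑ e^{μ i + c i}`.
Jensen again, now with the Gibbs weights `e^{μ i}`, bounds this below by
`Tr e^B · exp (Tr (e^B C) / Tr e^B)`: the Peierls–Bogolyubov inequality. Taking logarithms with
`B = -βH`, `C = -βsA` gives `F(s) ≤ F(0) + s ω` for every real `s`; `s = ±t` is the claim.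
-/

open Matrix RCLike Finset

theorem Real.sum_mul_exp_div_sum_le {α : Type*} (s : Finset α) {w : α → ℝ}
    (hw : ∀ i ∈ s, 0 ≤ w i) (c : α → ℝ) :
    (∑ i ∈ s, w i) * Real.exp ((∑ i ∈ s, w i * c i) / ∑ i ∈ s, w i) ≤
      ∑ i ∈ s, w i * Real.exp (c i) := by
  rcases (sum_nonneg hw).eq_or_lt with hW | hW
  · rw [← hW, zero_mul]
    exact sum_nonneg fun i hi => mul_nonneg (hw i hi) (Real.exp_pos _).le
  have hJ := convexOn_exp.map_centerMass_le hw hW (p := c) fun _ _ => Set.mem_univ _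
  simp only [centerMass, smul_eq_mul, Function.comp_def] at hJ
  rw [← inv_mul_eq_div]
  have := mul_le_mul_of_nonneg_left hJ hW.le
  rwa [mul_inv_cancel_left₀ hW.ne'] at this

namespace Matrix

variable {ι 𝕜 : Type*} [Fintype ι] [DecidableEq ι] [RCLike 𝕜]

theorem exp_unitary_conj {U : Matrix ι ι 𝕜} (hU : U ∈ unitaryGroup ι 𝕜)
    (X : Matrix ι ι 𝕜) :
    NormedSpace.exp (U * X * star U) = U * NormedSpace.exp X * star U := by
  have hinv : U⁻¹ = star U := inv_eq_left_inv (mem_unitaryGroup_iff'.mp hU)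
  rw [← hinv, exp_conj U X (Unitary.isUnit_coe (U := ⟨U, hU⟩))]

theorem trace_exp_unitary_conj {U : Matrix ι ι 𝕜} (hU : U ∈ unitaryGroup ι 𝕜)
    (X : Matrix ι ι 𝕜) :
    trace (NormedSpace.exp (U * X * star U)) = trace (NormedSpace.exp X) := by
  rw [exp_unitary_conj hU, trace_mul_cycle, mem_unitaryGroup_iff'.mp hU, one_mul]

theorem sum_norm_sq_unitary_row {U : Matrix ι ι 𝕜} (hU : U ∈ unitaryGroup ι 𝕜) (i : ι) :
    ∑ j, ‖U i j‖ ^ 2 = 1 := by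
  have h := congr_fun₂ (mem_unitaryGroup_iff.mp hU) i i
  rw [mul_apply, one_apply_eq] at h
  apply ofReal_injective (K := 𝕜)
  simpa [ofReal_sum, ← mul_conj] using h

theorem unitary_conj_diagonal_ofReal_apply_self (U : Matrix ι ι 𝕜) (d : ι → ℝ) (i : ι) :
    (U * diagonal (fun j => (d j : 𝕜)) * star U) i i =
      ((∑ j, ‖U i j‖ ^ 2 * d j : ℝ) : 𝕜) := by
  simp only [mul_apply, diagonal_apply, mul_ite, mul_zero, sum_ite_eq', mem_univ, if_true,
    star_apply, RCLike.star_def, ofReal_sum, ofReal_mul, ofReal_pow, ← mul_conj]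
  exact sum_congr rfl fun j _ => by ring

theorem exp_diagonal_ofReal (d : ι → ℝ) :
    NormedSpace.exp (diagonal (fun i => (d i : 𝕜))) =
      diagonal fun i => (Real.exp (d i) : 𝕜) := by
  rw [exp_diagonal, Pi.exp_def]
  congr 1
  funext i
  rw [Real.exp_eq_exp_ℝ]
  exact (NormedSpace.algebraMap_exp_comm (d i)).symm

namespace IsHermitian

theorem exp_eq {M : Matrix ι ι 𝕜} (hM : M.IsHermitian) :
    NormedSpace.exp M = (hM.eigenvectorUnitary : Matrix ι ι 𝕜) *
      diagonal (fun i => (Real.exp (hM.eigenvalues i) : 𝕜)) *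
      star (hM.eigenvectorUnitary : Matrix ι ι 𝕜) := by
  conv_lhs => rw [hM.spectral_theorem, Unitary.conjStarAlgAut_apply]
  rw [exp_unitary_conj hM.eigenvectorUnitary.2]
  exact congrArg (_ * · * _) (exp_diagonal_ofReal _)

/-- **Peierls' inequality**, entrywise. -/
theorem exp_re_apply_self_le {M : Matrix ι ι 𝕜} (hM : M.IsHermitian) (i : ι) :
    Real.exp (re (M i i)) ≤ re (NormedSpace.exp M i i) := by
  set U := (hM.eigenvectorUnitary : Matrix ι ι 𝕜)
  have hM_ii : M i i = ((∑ j, ‖U i j‖ ^ 2 * hM.eigenvalues j : ℝ) : 𝕜) := by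
    conv_lhs => rw [hM.spectral_theorem, Unitary.conjStarAlgAut_apply]
    exact unitary_conj_diagonal_ofReal_apply_self U _ i
  rw [hM_ii, hM.exp_eq, unitary_conj_diagonal_ofReal_apply_self, ofReal_re, ofReal_re]
  simpa only [smul_eq_mul] using convexOn_exp.map_sum_le (fun j _ => sq_nonneg ‖U i j‖)
    (sum_norm_sq_unitary_row hM.eigenvectorUnitary.2 i) fun j _ => Set.mem_univ _

theorem sum_exp_re_diag_le_re_trace_exp {M : Matrix ι ι 𝕜} (hM : M.IsHermitian) :
    ∑ i, Real.exp (re (M i i)) ≤ re (trace (NormedSpace.exp M)) := by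
  rw [trace, map_sum]
  exact sum_le_sum fun i _ => hM.exp_re_apply_self_le i

theorem re_trace_exp_pos [Nonempty ι] {M : Matrix ι ι 𝕜} (hM : M.IsHermitian) :
    0 < re (trace (NormedSpace.exp M)) :=
  (sum_pos (fun _ _ => Real.exp_pos _) univ_nonempty).trans_le hM.sum_exp_re_diag_le_re_trace_exp

end IsHermitian

theorem peierls_bogolyubov_diagonal (d : ι → ℝ) {C : Matrix ι ι 𝕜} (hC : C.IsHermitian) :
    re (trace (NormedSpace.exp (diagonal (fun i => (d i : 𝕜))))) *
        Real.exp (re (trace (NormedSpace.exp (diagonal (fun i => (d i : 𝕜))) * C)) /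
          re (trace (NormedSpace.exp (diagonal (fun i => (d i : 𝕜)))))) ≤
      re (trace (NormedSpace.exp (diagonal (fun i => (d i : 𝕜)) + C))) := by
  have hD : (diagonal (fun i => (d i : 𝕜))).IsHermitian :=
    isHermitian_diagonal_of_self_adjoint _ (funext fun i => conj_ofReal (d i))
  have hZ : re (trace (NormedSpace.exp (diagonal (fun i => (d i : 𝕜))))) =
      ∑ i, Real.exp (d i) := by
    simp [exp_diagonal_ofReal, trace_diagonal]
  have hDC : re (trace (NormedSpace.exp (diagonal (fun i => (d i : 𝕜))) * C)) =
      ∑ i, Real.exp (d i) * re (C i i) := by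
    simp [exp_diagonal_ofReal, trace, diagonal_mul]
  have hdiag : ∀ i, re ((diagonal (fun i => (d i : 𝕜)) + C) i i) = d i + re (C i i) := by
    simp
  calc _ = (∑ i, Real.exp (d i)) *
        Real.exp ((∑ i, Real.exp (d i) * re (C i i)) / ∑ i, Real.exp (d i)) := by rw [hZ, hDC]
    _ ≤ ∑ i, Real.exp (d i) * Real.exp (re (C i i)) :=
      Real.sum_mul_exp_div_sum_le _ (fun i _ => (Real.exp_pos _).le) _
    _ = ∑ i, Real.exp (re ((diagonal (fun i => (d i : 𝕜)) + C) i i)) := by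
      simp only [hdiag, Real.exp_add]
    _ ≤ _ := (hD.add hC).sum_exp_re_diag_le_re_trace_exp

theorem IsHermitian.peierls_bogolyubov {B C : Matrix ι ι 𝕜} (hB : B.IsHermitian)
    (hC : C.IsHermitian) :
    re (trace (NormedSpace.exp B)) *
        Real.exp (re (trace (NormedSpace.exp B * C)) / re (trace (NormedSpace.exp B))) ≤
      re (trace (NormedSpace.exp (B + C))) := by
  set U := (hB.eigenvectorUnitary : Matrix ι ι 𝕜)
  have hU : U ∈ unitaryGroup ι 𝕜 := hB.eigenvectorUnitary.2
  set D := diagonal fun i => (hB.eigenvalues i : 𝕜)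
  set C' := star U * C * U
  have hB_eq : B = U * D * star U := by
    conv_lhs => rw [hB.spectral_theorem, Unitary.conjStarAlgAut_apply]
    rfl
  have hC_eq : C = U * C' * star U := by
    simp only [C', ← Matrix.mul_assoc, mem_unitaryGroup_iff.mp hU, Matrix.one_mul]
    rw [Matrix.mul_assoc, mem_unitaryGroup_iff.mp hU, Matrix.mul_one]
  have hZ : trace (NormedSpace.exp B) = trace (NormedSpace.exp D) := by
    rw [hB_eq, trace_exp_unitary_conj hU]
  have hBC : trace (NormedSpace.exp B * C) = trace (NormedSpace.exp D * C') := by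
    rw [hB_eq, exp_unitary_conj hU]
    simp only [C', Matrix.mul_assoc]
    rw [trace_mul_comm]
    simp only [Matrix.mul_assoc]
  have hZ_add : trace (NormedSpace.exp (B + C)) = trace (NormedSpace.exp (D + C')) := by
    rw [hB_eq, hC_eq, ← Matrix.add_mul, ← Matrix.mul_add, trace_exp_unitary_conj hU]
  rw [hZ, hBC, hZ_add]
  exact peierls_bogolyubov_diagonal _ (isHermitian_conjTranspose_mul_mul U hC)

theorem IsHermitian.log_peierls_bogolyubov {B C : Matrix ι ι 𝕜} (hB : B.IsHermitian)
    (hC : C.IsHermitian) :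
    Real.log (re (trace (NormedSpace.exp B))) +
        re (trace (NormedSpace.exp B * C)) / re (trace (NormedSpace.exp B)) ≤
      Real.log (re (trace (NormedSpace.exp (B + C)))) := by
  cases isEmpty_or_nonempty ι
  · -- all traces vanish, and `log 0 = 0 / 0 = 0`
    simp [trace]
  have hZ := hB.re_trace_exp_pos
  have := Real.log_le_log (mul_pos hZ (Real.exp_pos _)) (hB.peierls_bogolyubov hC)
  rwa [Real.log_mul hZ.ne' (Real.exp_ne_zero _), Real.log_exp] at this

end Matrix

section FreeEnergy

variable {ι 𝕜 : Type*} [Fintype ι] [DecidableEq ι] [RCLike 𝕜]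

noncomputable def freeEnergy (β : ℝ) (H : Matrix ι ι 𝕜) : ℝ :=
  -(1 / β) * Real.log (re (trace (NormedSpace.exp ((-β : 𝕜) • H))))

noncomputable def gibbsExpectation (β : ℝ) (H A : Matrix ι ι 𝕜) : ℝ :=
  re (trace (NormedSpace.exp ((-β : 𝕜) • H) * A)) /
    re (trace (NormedSpace.exp ((-β : 𝕜) • H)))

theorem freeEnergy_add_smul_le {β : ℝ} (hβ : 0 < β) {H A : Matrix ι ι 𝕜}
    (hH : H.IsHermitian) (hA : A.IsHermitian) (s : ℝ) :
    freeEnergy β (H + (s : 𝕜) • A) ≤ freeEnergy β H + s * gibbsExpectation β H A := by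
  have hB : ((-β : 𝕜) • H).IsHermitian := hH.smul (IsSelfAdjoint.neg (conj_ofReal β))
  have hC : (((-(β * s) : ℝ) : 𝕜) • A).IsHermitian := hA.smul (conj_ofReal _)
  have hsplit : (-β : 𝕜) • (H + (s : 𝕜) • A) =
      (-β : 𝕜) • H + ((-(β * s) : ℝ) : 𝕜) • A := by
    rw [smul_add, smul_smul]
    push_cast
    ring_nf
  have hPB := hB.log_peierls_bogolyubov hC
  rw [← hsplit, mul_smul_comm, trace_smul, smul_eq_mul, re_ofReal_mul] at hPB
  unfold freeEnergy gibbsExpectation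
  have := mul_le_mul_of_nonneg_left hPB (inv_nonneg.2 hβ.le)
  field_simp at this ⊢
  linarith

end FreeEnergy

/-- Difference quotients of the free energy `F(t) = -(1/β) log Tr(e^{-β(H+tA)})`
sandwich the Gibbs expectation `ω^β(A) = Tr(e^{-βH}A)/Tr(e^{-βH})`:
for `t > 0`, `(F(0)-F(-t))/t ≥ ω^β(A) ≥ (F(t)-F(0))/t`. -/
theorem gibbs_expectation_sandwiched {n : ℕ} (β : ℝ) (hβ : 0 < β)
    (H A : Matrix (Fin n) (Fin n) ℂ) (hH : H.IsHermitian) (hA : A.IsHermitian)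
    (t : ℝ) (ht : 0 < t) :
    let F : ℝ → ℝ := fun s =>
      -(1 / β) * Real.log
        ((Matrix.trace (NormedSpace.exp ((-β : ℂ) • (H + (s : ℂ) • A)))).re)
    let ω : ℝ := (Matrix.trace (NormedSpace.exp ((-β : ℂ) • H) * A)).re /
      (Matrix.trace (NormedSpace.exp ((-β : ℂ) • H))).re
    (F t - F 0) / t ≤ ω ∧ ω ≤ (F 0 - F (-t)) / t := by
  intro F ω
  have hF0 : F 0 = freeEnergy β H := by simp [F, freeEnergy]
  have hF : ∀ s, F s ≤ F 0 + s * ω := fun s => hF0 ▸ freeEnergy_add_smul_le hβ hH hA s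
  constructor
  · rw [div_le_iff₀ ht]
    linarith [hF t]
  · rw [le_div_iff₀ ht]
    linarith [hF (-t)]
end

section
/- Berezin–Lieb inequality (lower bound, finite dimensions): Let H be a Hermitian matrix on a finite-dimensional Hilbert space, {Ψ_σ}_{σ∈S} unit vectors with resolution of identity c ∫_S |Ψ_σ⟩⟨Ψ_σ| dμ(σ) = I. Then with ȟ(σ) = ⟨Ψ_σ, H Ψ_σ⟩ (the lower symbol), for every β > 0: c ∫_S e^{-β ȟ(σ)} dμ(σ) ≤ Tr(e^{-βH}). -/
/-!
In an eigenbasis `(e_i)` of `H` with eigenvalues `λ_i`, the weights `|⟨Ψ_σ, e_i⟩|²` form a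
probability vector with barycentre `ȟ(σ)`, so convexity of `x ↦ e^{-βx}` gives
`e^{-β ȟ(σ)} ≤ ∑_i |⟨Ψ_σ, e_i⟩|² e^{-βλ_i}`. Integrating against `c dμ`, the resolution of
identity turns each weight into `‖e_i‖² = 1`, leaving `∑_i e^{-βλ_i} = Tr e^{-βH}`.
-/

open MeasureTheory Matrix

section
variable {𝕜 m ι : Type*} [RCLike 𝕜] [Fintype m] [Fintype ι]

theorem OrthonormalBasis.star_dotProduct_self (b : OrthonormalBasis ι 𝕜 (EuclideanSpace 𝕜 m))
    (i : ι) : star ⇑(b i) ⬝ᵥ ⇑(b i) = 1 := by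
  rw [dotProduct_comm, ← EuclideanSpace.inner_eq_star_dotProduct, inner_self_eq_norm_sq_to_K,
    b.norm_eq_one]
  simp

theorem OrthonormalBasis.sum_norm_sq_star_dotProduct
    (b : OrthonormalBasis ι 𝕜 (EuclideanSpace 𝕜 m)) (ψ : m → 𝕜) :
    ∑ i, ‖star ψ ⬝ᵥ ⇑(b i)‖ ^ 2 = RCLike.re (star ψ ⬝ᵥ ψ) := by
  have := b.sum_sq_norm_inner_left (WithLp.toLp 2 ψ)
  simp only [EuclideanSpace.inner_eq_star_dotProduct, dotProduct_comm] at this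
  rw [this, ← inner_self_eq_norm_sq (𝕜 := 𝕜), EuclideanSpace.inner_eq_star_dotProduct,
    dotProduct_comm]

theorem Matrix.star_dotProduct_mul_diagonal_mul_conjTranspose_mulVec [DecidableEq ι]
    (V : Matrix m ι 𝕜) (d : ι → 𝕜) (ψ : m → 𝕜) :
    star ψ ⬝ᵥ (V * diagonal d * Vᴴ) *ᵥ ψ = ∑ i, d i * (‖star ψ ⬝ᵥ V.col i‖ : 𝕜) ^ 2 := by
  rw [← mulVec_mulVec, ← mulVec_mulVec, dotProduct_mulVec]
  refine Finset.sum_congr rfl fun i _ => ?_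
  have hV : (star ψ ᵥ* V) i = star ψ ⬝ᵥ V.col i := rfl
  have hVH : (Vᴴ *ᵥ ψ) i = star (star ψ ⬝ᵥ V.col i) := by
    simp [mulVec, dotProduct, star_sum, mul_comm]
  rw [mulVec_diagonal, hV, hVH, ← RCLike.mul_conj, RCLike.star_def]
  ring
end

namespace Matrix.IsHermitian
variable {𝕜 n : Type*} [RCLike 𝕜] [Fintype n] [DecidableEq n] {A : Matrix n n 𝕜}

theorem star_dotProduct_mulVec_eq_sum (hA : A.IsHermitian) (ψ : n → 𝕜) :
    star ψ ⬝ᵥ A *ᵥ ψ =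
      ∑ i, (hA.eigenvalues i : 𝕜) * (‖star ψ ⬝ᵥ ⇑(hA.eigenvectorBasis i)‖ : 𝕜) ^ 2 := by
  conv_lhs => rw [hA.spectral_theorem, Unitary.conjStarAlgAut_apply, star_eq_conjTranspose]
  rw [star_dotProduct_mul_diagonal_mul_conjTranspose_mulVec]
  simp

theorem re_star_dotProduct_mulVec_eq_sum (hA : A.IsHermitian) (ψ : n → 𝕜) :
    RCLike.re (star ψ ⬝ᵥ A *ᵥ ψ) =
      ∑ i, hA.eigenvalues i * ‖star ψ ⬝ᵥ ⇑(hA.eigenvectorBasis i)‖ ^ 2 := by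
  rw [hA.star_dotProduct_mulVec_eq_sum, map_sum]
  simp_rw [← RCLike.ofReal_pow, ← RCLike.ofReal_mul, RCLike.ofReal_re]

theorem map_re_star_dotProduct_mulVec_le {f : ℝ → ℝ} (hf : ConvexOn ℝ Set.univ f)
    (hA : A.IsHermitian) {ψ : n → 𝕜} (hψ : star ψ ⬝ᵥ ψ = 1) :
    f (RCLike.re (star ψ ⬝ᵥ A *ᵥ ψ)) ≤
      ∑ i, ‖star ψ ⬝ᵥ ⇑(hA.eigenvectorBasis i)‖ ^ 2 * f (hA.eigenvalues i) := by
  have hw : ∑ i, ‖star ψ ⬝ᵥ ⇑(hA.eigenvectorBasis i)‖ ^ 2 = 1 := by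
    rw [OrthonormalBasis.sum_norm_sq_star_dotProduct, hψ, RCLike.one_re]
  rw [hA.re_star_dotProduct_mulVec_eq_sum]
  simpa only [smul_eq_mul, mul_comm (hA.eigenvalues _)] using
    hf.map_sum_le (fun i _ => by positivity) hw (fun i _ => Set.mem_univ (hA.eigenvalues i))

theorem trace_exp_smul {A : Matrix n n ℂ} (hA : A.IsHermitian) (t : ℂ) :
    (NormedSpace.exp (t • A)).trace = ∑ i, Complex.exp (t * hA.eigenvalues i) := by
  set U := Unitary.toUnits hA.eigenvectorUnitary
  have hconj : t • A = (U : Matrix n n ℂ) * diagonal (fun i => t * hA.eigenvalues i) *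
      ((U⁻¹ : (Matrix n n ℂ)ˣ) : Matrix n n ℂ) := by
    conv_lhs => rw [hA.spectral_theorem, Unitary.conjStarAlgAut_apply]
    rw [← smul_mul_assoc, ← mul_smul_comm, ← diagonal_smul]
    rfl
  rw [hconj, Matrix.exp_units_conj, Matrix.exp_diagonal, trace_mul_cycle, Units.inv_mul, one_mul,
    trace_diagonal]
  simp [Complex.exp_eq_exp_ℂ]

end Matrix.IsHermitian

/-- The resolution of identity `c ∫ |Ψ_σ⟩⟨Ψ_σ| dμ(σ) = 1`, in terms of its quadratic form. -/
def IsResolutionOfIdentity {S m : Type*} [MeasurableSpace S] [Fintype m] (μ : Measure S)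
    (Ψ : S → m → ℂ) (c : ℝ) : Prop :=
  ∀ ψ : m → ℂ, c * ∫ σ, ‖star (Ψ σ) ⬝ᵥ ψ‖ ^ 2 ∂μ = (star ψ ⬝ᵥ ψ).re

namespace IsResolutionOfIdentity
variable {S m ι : Type*} [MeasurableSpace S] [Fintype m] [Fintype ι] {μ : Measure S}
  {Ψ : S → m → ℂ} {c : ℝ}

theorem integrable_norm_sq (h : IsResolutionOfIdentity μ Ψ c) {ψ : m → ℂ}
    (hψ : (star ψ ⬝ᵥ ψ).re ≠ 0) : Integrable (fun σ => ‖star (Ψ σ) ⬝ᵥ ψ‖ ^ 2) μ := by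
  refine Integrable.of_integral_ne_zero fun h0 => hψ ?_
  rw [← h ψ, h0, mul_zero]

theorem integrable_sum_norm_sq_mul (h : IsResolutionOfIdentity μ Ψ c)
    (b : OrthonormalBasis ι ℂ (EuclideanSpace ℂ m)) (a : ι → ℝ) :
    Integrable (fun σ => ∑ i, ‖star (Ψ σ) ⬝ᵥ ⇑(b i)‖ ^ 2 * a i) μ :=
  integrable_finsetSum _ fun i _ =>
    (h.integrable_norm_sq (by simp [b.star_dotProduct_self])).mul_const _

theorem mul_integral_sum_norm_sq_mul (h : IsResolutionOfIdentity μ Ψ c)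
    (b : OrthonormalBasis ι ℂ (EuclideanSpace ℂ m)) (a : ι → ℝ) :
    c * ∫ σ, ∑ i, ‖star (Ψ σ) ⬝ᵥ ⇑(b i)‖ ^ 2 * a i ∂μ = ∑ i, a i := by
  rw [integral_finsetSum _ fun i _ =>
    (h.integrable_norm_sq (by simp [b.star_dotProduct_self])).mul_const _, Finset.mul_sum]
  refine Finset.sum_congr rfl fun i _ => ?_
  rw [integral_mul_const, ← mul_assoc, h, b.star_dotProduct_self, Complex.one_re, one_mul]

end IsResolutionOfIdentity

theorem berezin_lieb_lower_general {n : ℕ} {S : Type*} [MeasurableSpace S] (μ : Measure S)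
    (Ψ : S → (Fin n → ℂ)) (hΨ : ∀ σ, star (Ψ σ) ⬝ᵥ Ψ σ = 1)
    (c : ℝ) (hc : 0 < c)
    (hres : ∀ ψ : Fin n → ℂ, c * ∫ σ, ‖star (Ψ σ) ⬝ᵥ ψ‖ ^ 2 ∂μ =
      (star ψ ⬝ᵥ ψ).re)
    (H : Matrix (Fin n) (Fin n) ℂ) (hH : H.IsHermitian) (β : ℝ) :
    c * ∫ σ, Real.exp (-β * (star (Ψ σ) ⬝ᵥ H.mulVec (Ψ σ)).re) ∂μ ≤
      (Matrix.trace (NormedSpace.exp ((-β : ℂ) • H))).re := by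
  set b := hH.eigenvectorBasis
  have hconvex : ConvexOn ℝ Set.univ fun x => Real.exp (-β * x) :=
    convexOn_exp.comp_linearMap (LinearMap.mul ℝ ℝ (-β))
  have hjensen : ∀ σ, Real.exp (-β * (star (Ψ σ) ⬝ᵥ H *ᵥ Ψ σ).re) ≤
      ∑ i, ‖star (Ψ σ) ⬝ᵥ ⇑(b i)‖ ^ 2 * Real.exp (-β * hH.eigenvalues i) := fun σ =>
    hH.map_re_star_dotProduct_mulVec_le hconvex (hΨ σ)
  calc c * ∫ σ, Real.exp (-β * (star (Ψ σ) ⬝ᵥ H *ᵥ Ψ σ).re) ∂μ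
      ≤ c * ∫ σ, ∑ i, ‖star (Ψ σ) ⬝ᵥ ⇑(b i)‖ ^ 2 * Real.exp (-β * hH.eigenvalues i) ∂μ :=
        mul_le_mul_of_nonneg_left (integral_mono_of_nonneg
          (.of_forall fun σ => (Real.exp_pos _).le)
          (IsResolutionOfIdentity.integrable_sum_norm_sq_mul hres b _)
          (.of_forall hjensen)) hc.le
    _ = ∑ i, Real.exp (-β * hH.eigenvalues i) :=
        IsResolutionOfIdentity.mul_integral_sum_norm_sq_mul hres b _
    _ = (Matrix.trace (NormedSpace.exp ((-β : ℂ) • H))).re := by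
        rw [hH.trace_exp_smul, Complex.re_sum]
        simp [← Complex.ofReal_neg, ← Complex.ofReal_mul, Complex.exp_ofReal_re]

/-- **Berezin–Lieb inequality (lower bound)**: if unit vectors `Ψ_σ` in `ℂ^n`
satisfy the resolution of identity `c ∫ |⟨ψ, Ψ_σ⟩|² dμ = ‖ψ‖²`, and
`ȟ(σ) = ⟨Ψ_σ, H Ψ_σ⟩` is the lower symbol of a Hermitian matrix `H`, then for
`β > 0`: `c ∫ e^{-β ȟ(σ)} dμ(σ) ≤ Tr(e^{-βH})`. -/
theorem berezin_lieb_lower {n : ℕ} {S : Type*} [MeasurableSpace S] (μ : Measure S)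
    [SigmaFinite μ] (Ψ : S → (Fin n → ℂ)) (hΨ : ∀ σ, star (Ψ σ) ⬝ᵥ Ψ σ = 1)
    (c : ℝ) (hc : 0 < c)
    (hres : ∀ ψ : Fin n → ℂ, c * ∫ σ, ‖star (Ψ σ) ⬝ᵥ ψ‖ ^ 2 ∂μ =
      (star ψ ⬝ᵥ ψ).re)
    (H : Matrix (Fin n) (Fin n) ℂ) (hH : H.IsHermitian) (β : ℝ) (hβ : 0 < β)
    (hint : Integrable (fun σ => Real.exp (-β * (star (Ψ σ) ⬝ᵥ H.mulVec (Ψ σ)).re)) μ) :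
    c * ∫ σ, Real.exp (-β * (star (Ψ σ) ⬝ᵥ H.mulVec (Ψ σ)).re) ∂μ ≤
      (Matrix.trace (NormedSpace.exp ((-β : ℂ) • H))).re :=
  berezin_lieb_lower_general μ Ψ hΨ c hc hres H hH β
end

section
/- Subadditivity of entropy for reduced states: Let ρ be a density matrix on (ℂ^k)^{⊗(m+n)}, and let ρ_A, ρ_B be its partial traces on the first m and last n factors respectively. Then -Tr(ρ log ρ) ≤ -Tr(ρ_A log ρ_A) - Tr(ρ_B log ρ_B). -/
open Matrix
open scoped ComplexOrder Kronecker

section aux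

-- scalar Klein-type inequality
lemma log_term_ineq {c p mu nu : ℝ} (hc : 0 ≤ c) (hp : 0 ≤ p) (hmu : 0 ≤ mu) (hnu : 0 ≤ nu)
    (hsupp : mu * nu = 0 → c * p = 0) :
    c * (p - mu * nu) ≤ c * p * (Real.log p - (Real.log mu + Real.log nu)) := by
  by_cases hcp : c * p = 0
  · rw [mul_sub, hcp]
    have : c * (mu * nu) ≥ 0 := mul_nonneg hc (mul_nonneg hmu hnu)
    nlinarith
  have hq : mu * nu ≠ 0 := fun h => hcp (hsupp h)
  have hc' : 0 < c := lt_of_le_of_ne hc (by rintro rfl; exact hcp (zero_mul _))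
  have hp' : 0 < p := lt_of_le_of_ne hp (by rintro rfl; exact hcp (mul_zero _))
  have hmu' : 0 < mu := lt_of_le_of_ne hmu (by rintro rfl; exact hq (zero_mul _))
  have hnu' : 0 < nu := lt_of_le_of_ne hnu (by rintro rfl; exact hq (mul_zero _))
  have hqpos : 0 < mu * nu := mul_pos hmu' hnu'
  rw [← Real.log_mul hmu'.ne' hnu'.ne']
  have key : Real.log ((mu * nu) / p) ≤ (mu * nu) / p - 1 :=
    Real.log_le_sub_one_of_pos (div_pos hqpos hp')
  rw [Real.log_div hqpos.ne' hp'.ne'] at key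
  have hdiv : p * ((mu * nu) / p) = mu * nu := by field_simp
  nlinarith [mul_le_mul_of_nonneg_left key hp'.le]

-- abstract Klein sum inequality
lemma klein_sum {ι κ : Type*} [Fintype ι] [Fintype κ]
    (p : ι → ℝ) (q : κ → ℝ) (c : ι → κ → ℝ) (L : κ → ℝ)
    (hrow : ∀ i, ∑ j, c i j = 1) (hcol : ∀ j, ∑ i, c i j = 1)
    (hptr : ∑ i, p i = 1) (hqtr : ∑ j, q j = 1)
    (hterm : ∀ i j, c i j * (p i - q j) ≤ c i j * p i * (Real.log (p i) - L j)) :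
    ∑ j, (∑ i, c i j * p i) * L j ≤ ∑ i, p i * Real.log (p i) := by
  have e1 : ∑ i, ∑ j, c i j * p i = 1 := by
    have h : ∀ i, ∑ j, c i j * p i = p i := fun i => by
      rw [← Finset.sum_mul, hrow, one_mul]
    simp_rw [h]; exact hptr
  have e2 : ∑ i, ∑ j, c i j * q j = 1 := by
    rw [Finset.sum_comm]
    have h : ∀ j, ∑ i, c i j * q j = q j := fun j => by
      rw [← Finset.sum_mul, hcol, one_mul]
    simp_rw [h]; exact hqtr
  have key : (0:ℝ) ≤ ∑ i, ∑ j, c i j * p i * (Real.log (p i) - L j) := by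
    have h0 : ∑ i, ∑ j, c i j * (p i - q j) = 0 := by
      simp_rw [mul_sub, Finset.sum_sub_distrib]; rw [e1, e2, sub_self]
    calc (0:ℝ) = ∑ i, ∑ j, c i j * (p i - q j) := h0.symm
      _ ≤ _ := Finset.sum_le_sum fun i _ => Finset.sum_le_sum fun j _ => hterm i j
  have f1 : ∑ i, ∑ j, c i j * p i * Real.log (p i) = ∑ i, p i * Real.log (p i) := by
    refine Finset.sum_congr rfl fun i _ => ?_
    simp_rw [mul_assoc]
    rw [← Finset.sum_mul, hrow, one_mul]
  have f2 : ∑ i, ∑ j, c i j * p i * L j = ∑ j, (∑ i, c i j * p i) * L j := by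
    rw [Finset.sum_comm]
    exact Finset.sum_congr rfl fun j _ => by rw [Finset.sum_mul]
  simp_rw [mul_sub, Finset.sum_sub_distrib] at key
  rw [f1, f2] at key
  linarith

lemma marginalA {A B : Type*} [Fintype A] [Fintype B] [DecidableEq B]
    (ρ : Matrix (A×B) (A×B) ℂ) (V : Matrix A A ℂ) (W : Matrix B B ℂ)
    (hW : W * Wᴴ = 1) (a : A) :
    ∑ b, ((V ⊗ₖ W)ᴴ * ρ * (V ⊗ₖ W)) (a,b) (a,b)
      = (Vᴴ * (Matrix.of fun x x' => ∑ y, ρ (x,y) (x',y)) * V) a a := by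
  have hWd : ∀ y y' : B, (∑ b, W y' b * star (W y b)) = if y' = y then 1 else 0 := by
    intro y y'
    have := congrFun (congrFun hW y') y
    simpa [Matrix.mul_apply, Matrix.conjTranspose_apply, Matrix.one_apply] using this
  simp only [Matrix.mul_apply, Matrix.conjTranspose_apply, Matrix.kroneckerMap_apply,
    star_mul', Fintype.sum_prod_type, Matrix.of_apply, Finset.sum_mul, Finset.mul_sum]
  rw [Finset.sum_comm]
  conv_lhs => enter [2,x']; rw [Finset.sum_comm]
  conv_lhs => enter [2,x',2,y']; rw [Finset.sum_comm]
  conv_lhs => enter [2,x',2,y',2,x]; rw [Finset.sum_comm]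
  have key : ∀ (x' : A) (y' : B) (x : A),
      (∑ y, ∑ b, star (V x a) * star (W y b) * ρ (x,y) (x',y') * (V x' a * W y' b))
      = star (V x a) * ρ (x,y') (x',y') * V x' a := by
    intro x' y' x
    have h1 : ∀ y : B, (∑ b, star (V x a) * star (W y b) * ρ (x,y) (x',y') * (V x' a * W y' b))
        = star (V x a) * ρ (x,y) (x',y') * V x' a * (if y' = y then 1 else 0) := by
      intro y
      rw [← hWd y y', Finset.mul_sum]
      exact Finset.sum_congr rfl fun b _ => by ring
    simp_rw [h1, mul_ite, mul_one, mul_zero]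
    simp [Finset.sum_ite_eq]
  simp_rw [key]
  exact Finset.sum_congr rfl fun x _ => Finset.sum_comm

lemma marginalB {A B : Type*} [Fintype A] [Fintype B] [DecidableEq A]
    (ρ : Matrix (A×B) (A×B) ℂ) (V : Matrix A A ℂ) (W : Matrix B B ℂ)
    (hV : V * Vᴴ = 1) (b : B) :
    ∑ a, ((V ⊗ₖ W)ᴴ * ρ * (V ⊗ₖ W)) (a,b) (a,b)
      = (Wᴴ * (Matrix.of fun y y' => ∑ x, ρ (x,y) (x,y')) * W) b b := by
  have hVd : ∀ x x' : A, (∑ a, V x' a * star (V x a)) = if x' = x then 1 else 0 := by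
    intro x x'
    have := congrFun (congrFun hV x') x
    simpa [Matrix.mul_apply, Matrix.conjTranspose_apply, Matrix.one_apply] using this
  simp only [Matrix.mul_apply, Matrix.conjTranspose_apply, Matrix.kroneckerMap_apply,
    star_mul', Fintype.sum_prod_type, Matrix.of_apply, Finset.sum_mul, Finset.mul_sum]
  rw [Finset.sum_comm]
  conv_lhs => enter [2,x']; rw [Finset.sum_comm]
  conv_lhs => enter [2,x',2,y']; rw [Finset.sum_comm]
  conv_lhs => enter [2,x',2,y',2,x]; rw [Finset.sum_comm]
  conv_lhs => enter [2,x',2,y']; rw [Finset.sum_comm]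
  have key : ∀ (x' : A) (y' y : B),
      (∑ x, ∑ a, star (V x a) * star (W y b) * ρ (x,y) (x',y') * (V x' a * W y' b))
      = star (W y b) * ρ (x',y) (x',y') * W y' b := by
    intro x' y' y
    have h1 : ∀ x : A, (∑ a, star (V x a) * star (W y b) * ρ (x,y) (x',y') * (V x' a * W y' b))
        = star (W y b) * ρ (x,y) (x',y') * W y' b * (if x' = x then 1 else 0) := by
      intro x
      rw [← hVd x x', Finset.mul_sum]
      exact Finset.sum_congr rfl fun aa _ => by ring
    simp_rw [h1, mul_ite, mul_one, mul_zero]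
    simp [Finset.sum_ite_eq]
  simp_rw [key]
  have g1 : ∑ i : A, ∑ y' : B, ∑ y : B, star (W y b) * ρ (i, y) (i, y') * W y' b
      = ∑ y' : B, ∑ i : A, ∑ y : B, star (W y b) * ρ (i, y) (i, y') * W y' b :=
    Finset.sum_comm
  rw [g1]
  refine Finset.sum_congr rfl fun y' _ => ?_
  exact Finset.sum_comm

lemma partial_psd {A B : Type*} [Fintype A] [Fintype B] [DecidableEq B]
    (ρ : Matrix (A×B) (A×B) ℂ) (hρ : ρ.PosSemidef) :
    (Matrix.of fun a a' => ∑ b, ρ (a,b) (a',b) : Matrix A A ℂ).PosSemidef := by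
  refine Matrix.PosSemidef.of_dotProduct_mulVec_nonneg ?_ ?_
  · apply Matrix.IsHermitian.ext
    intro a a'
    simp only [Matrix.of_apply, star_sum]
    exact Finset.sum_congr rfl fun b _ => hρ.1.apply _ _
  · intro x
    have key : star x ⬝ᵥ (Matrix.of fun a a' => ∑ b, ρ (a,b) (a',b) : Matrix A A ℂ) *ᵥ x
        = ∑ b : B, star (fun p : A × B => if p.2 = b then x p.1 else 0) ⬝ᵥ
            ρ *ᵥ (fun p : A × B => if p.2 = b then x p.1 else 0) := by
      simp only [dotProduct, Matrix.mulVec, Pi.star_apply, apply_ite (star : ℂ → ℂ), star_zero,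
        Fintype.sum_prod_type, Matrix.of_apply, Finset.mul_sum, Finset.sum_mul,
        mul_ite, ite_mul, zero_mul, mul_zero]
      simp only [Finset.sum_ite_eq', Finset.mem_univ, if_true, apply_ite (star : ℂ → ℂ),
        star_zero, ite_mul, zero_mul, Finset.sum_ite_eq', if_true]
      conv_rhs => enter [2,b,2,x2]; rw [Finset.sum_comm]
      simp only [Finset.sum_ite_eq', Finset.mem_univ, if_true]
      have g1 : ∀ x1 : A, (∑ x2 : A, ∑ i : B, star (x x1) * (ρ (x1,i) (x2,i) * x x2))
          = ∑ i : B, ∑ x2 : A, star (x x1) * (ρ (x1,i) (x2,i) * x x2) := fun _ => Finset.sum_comm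
      simp_rw [g1]
      exact Finset.sum_comm
    rw [key]
    exact Finset.sum_nonneg fun b _ => hρ.dotProduct_mulVec_nonneg _

lemma sum_eigenvalues_eq {ι : Type*} [Fintype ι] [DecidableEq ι] {M : Matrix ι ι ℂ}
    (hM : M.IsHermitian) : ((∑ i, hM.eigenvalues i : ℝ) : ℂ) = M.trace := by
  conv_rhs => rw [hM.spectral_theorem, Unitary.conjStarAlgAut_apply]
  rw [Matrix.trace_mul_cycle, Unitary.coe_star_mul_self, Matrix.one_mul, Matrix.trace_diagonal]
  push_cast
  rfl

end aux

/-- The von Neumann entropy `S(ρ) = -Tr(ρ log ρ)`, defined spectrally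
(convention `0 log 0 = 0`, which holds since `Real.log 0 = 0`). -/
noncomputable def vN {m : Type*} [Fintype m] [DecidableEq m] (ρ : Matrix m m ℂ) : ℝ :=
  if h : ρ.IsHermitian then -∑ i, h.eigenvalues i * Real.log (h.eigenvalues i) else 0

/-- **Subadditivity of the von Neumann entropy**: for a density matrix `ρ` on
`(ℂ^k)^{⊗(m+n)} = (ℂ^k)^{⊗m} ⊗ (ℂ^k)^{⊗n}` with reduced density matrices `ρ_A`,
`ρ_B` (partial traces over the last `n`, resp. first `m`, factors),
`S(ρ) ≤ S(ρ_A) + S(ρ_B)`. -/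
theorem entropy_subadditive {k m n : ℕ}
    (ρ : Matrix ((Fin m → Fin k) × (Fin n → Fin k)) ((Fin m → Fin k) × (Fin n → Fin k)) ℂ)
    (hρ : ρ.PosSemidef) (htr : Matrix.trace ρ = 1) :
    let ρA : Matrix (Fin m → Fin k) (Fin m → Fin k) ℂ := fun a a' => ∑ b, ρ (a, b) (a', b)
    let ρB : Matrix (Fin n → Fin k) (Fin n → Fin k) ℂ := fun b b' => ∑ a, ρ (a, b) (a, b')
    vN ρ ≤ vN ρA + vN ρB := by
  intro ρA ρB
  have hcl : ∀ (P : Prop), P ∨ ¬ P := fun P => Classical.em P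
  let A := (Fin m → Fin k)
  let B := (Fin n → Fin k)
  have hρH : ρ.IsHermitian := hρ.1
  have hApsd : ρA.PosSemidef := partial_psd ρ hρ
  have hBpsd : ρB.PosSemidef := by
    have h := partial_psd (ρ.submatrix (Equiv.prodComm B A) (Equiv.prodComm B A))
      (hρ.submatrix _)
    exact h
  have hAH : ρA.IsHermitian := hApsd.1
  have hBH : ρB.IsHermitian := hBpsd.1
  -- eigen data
  set p : (A × B) → ℝ := hρH.eigenvalues with hp
  set μ : A → ℝ := hAH.eigenvalues with hμ
  set ν : B → ℝ := hBH.eigenvalues with hν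
  set U : Matrix (A × B) (A × B) ℂ := (Matrix.IsHermitian.eigenvectorUnitary hρH :
    Matrix (A × B) (A × B) ℂ) with hU
  set V : Matrix A A ℂ := (Matrix.IsHermitian.eigenvectorUnitary hAH : Matrix A A ℂ) with hV
  set W : Matrix B B ℂ := (Matrix.IsHermitian.eigenvectorUnitary hBH : Matrix B B ℂ) with hW
  have hUU : U * star U = 1 :=
    (Matrix.mem_unitaryGroup_iff).mp (Matrix.IsHermitian.eigenvectorUnitary hρH).2
  have hUU' : star U * U = 1 := Unitary.coe_star_mul_self _
  have hVV : V * star V = 1 :=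
    (Matrix.mem_unitaryGroup_iff).mp (Matrix.IsHermitian.eigenvectorUnitary hAH).2
  have hVV' : star V * V = 1 := Unitary.coe_star_mul_self _
  have hWW : W * star W = 1 :=
    (Matrix.mem_unitaryGroup_iff).mp (Matrix.IsHermitian.eigenvectorUnitary hBH).2
  have hWW' : star W * W = 1 := Unitary.coe_star_mul_self _
  set K : Matrix (A × B) (A × B) ℂ := V ⊗ₖ W with hK
  have hKH : Kᴴ = Vᴴ ⊗ₖ Wᴴ := by
    ext ⟨a, b⟩ ⟨a', b'⟩
    simp [hK, Matrix.conjTranspose_apply, Matrix.kroneckerMap_apply, star_mul']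
  have hKK : K * Kᴴ = 1 := by
    rw [hKH, hK, ← Matrix.mul_kronecker_mul, ← Matrix.star_eq_conjTranspose,
      ← Matrix.star_eq_conjTranspose, hVV, hWW, Matrix.one_kronecker_one]
  have hKK' : Kᴴ * K = 1 := by
    rw [hKH, hK, ← Matrix.mul_kronecker_mul, ← Matrix.star_eq_conjTranspose,
      ← Matrix.star_eq_conjTranspose, hVV', hWW', Matrix.one_kronecker_one]
  set N : Matrix (A × B) (A × B) ℂ := Uᴴ * K with hN
  have hNH : Nᴴ = Kᴴ * U := by
    rw [hN, Matrix.conjTranspose_mul, Matrix.conjTranspose_conjTranspose]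
  have hNN : N * Nᴴ = 1 := by
    rw [hNH, hN, Matrix.mul_assoc, ← Matrix.mul_assoc K, hKK, Matrix.one_mul,
      ← Matrix.star_eq_conjTranspose, hUU']
  have hUUH : U * Uᴴ = 1 := by rw [← Matrix.star_eq_conjTranspose]; exact hUU
  have hNN' : Nᴴ * N = 1 := by
    rw [hNH, hN, Matrix.mul_assoc, ← Matrix.mul_assoc U, hUUH, Matrix.one_mul, hKK']
  set c : (A × B) → (A × B) → ℝ := fun i j => Complex.normSq (N i j) with hc
  have hcnn : ∀ i j, 0 ≤ c i j := fun i j => Complex.normSq_nonneg _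
  have hrow : ∀ i, ∑ j, c i j = 1 := by
    intro i
    have h : ((∑ j, c i j : ℝ) : ℂ) = (N * Nᴴ) i i := by
      push_cast
      simp [Matrix.mul_apply, Matrix.conjTranspose_apply, hc, Complex.star_def,
        Complex.mul_conj]
    rw [hNN] at h
    have : ((∑ j, c i j : ℝ) : ℂ) = ((1 : ℝ) : ℂ) := by simpa [Matrix.one_apply] using h
    exact_mod_cast this
  have hcol : ∀ j, ∑ i, c i j = 1 := by
    intro j
    have h : ((∑ i, c i j : ℝ) : ℂ) = (Nᴴ * N) j j := by
      push_cast
      simp [Matrix.mul_apply, Matrix.conjTranspose_apply, hc, Complex.star_def,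
        Complex.normSq_eq_conj_mul_self]
    rw [hNN'] at h
    have : ((∑ i, c i j : ℝ) : ℂ) = ((1 : ℝ) : ℂ) := by simpa [Matrix.one_apply] using h
    exact_mod_cast this
  -- the distribution s = diagonal of K^H ρ K
  set s : (A × B) → ℝ := fun j => ∑ i, c i j * p i with hs
  have hsnn : ∀ j, 0 ≤ s j :=
    fun j => Finset.sum_nonneg fun i _ => mul_nonneg (hcnn i j) (hρ.eigenvalues_nonneg i)
  have hsC : ∀ j, ((s j : ℝ) : ℂ) = (Kᴴ * ρ * K) j j := by
    intro j
    have hKρK : Kᴴ * ρ * K = Nᴴ * (Matrix.diagonal (RCLike.ofReal ∘ p) * N) := by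
      rw [hNH, hN]
      conv_lhs => rw [hρH.spectral_theorem, Unitary.conjStarAlgAut_apply]
      simp only [Matrix.mul_assoc]
      rfl
    rw [hKρK]
    show ((∑ i, c i j * p i : ℝ) : ℂ) = _
    push_cast
    simp only [Matrix.mul_apply, Matrix.conjTranspose_apply, Matrix.diagonal_apply,
      Function.comp_apply, ite_mul, zero_mul, Finset.sum_ite_eq, Finset.mem_univ, if_true]
    refine Finset.sum_congr rfl fun i _ => ?_
    rw [show ((c i j : ℝ) : ℂ) = star (N i j) * N i j from by
      rw [hc, Complex.star_def, Complex.normSq_eq_conj_mul_self]]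
    rw [show (RCLike.ofReal (p i) : ℂ) = ((p i : ℝ) : ℂ) from rfl]
    ring
  -- marginals
  have hmargA : ∀ a, ∑ b, s (a, b) = μ a := by
    intro a
    have h : ((∑ b, s (a, b) : ℝ) : ℂ) = ((μ a : ℝ) : ℂ) := by
      push_cast
      calc ∑ b, ((s (a, b) : ℝ) : ℂ) = ∑ b, (Kᴴ * ρ * K) (a, b) (a, b) :=
            Finset.sum_congr rfl fun b _ => hsC (a, b)
        _ = (Vᴴ * (Matrix.of fun x x' => ∑ y, ρ (x, y) (x', y)) * V) a a := by
            rw [hK]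
            exact marginalA ρ V W (by rw [← Matrix.star_eq_conjTranspose]; exact hWW) a
        _ = (Matrix.diagonal (RCLike.ofReal ∘ μ)) a a := by
            rw [show (Matrix.of fun x x' => ∑ y, ρ (x, y) (x', y)) = ρA from rfl,
              show Vᴴ = star V from (Matrix.star_eq_conjTranspose V).symm, hV,
              ← Unitary.conjStarAlgAut_star_apply (S := ℂ),
              Matrix.IsHermitian.conjStarAlgAut_star_eigenvectorUnitary hAH]
        _ = ((μ a : ℝ) : ℂ) := by simp
    exact_mod_cast h
  have hmargB : ∀ b, ∑ a, s (a, b) = ν b := by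
    intro b
    have h : ((∑ a, s (a, b) : ℝ) : ℂ) = ((ν b : ℝ) : ℂ) := by
      push_cast
      calc ∑ a, ((s (a, b) : ℝ) : ℂ) = ∑ a, (Kᴴ * ρ * K) (a, b) (a, b) :=
            Finset.sum_congr rfl fun a _ => hsC (a, b)
        _ = (Wᴴ * (Matrix.of fun y y' => ∑ x, ρ (x, y) (x, y')) * W) b b := by
            rw [hK]
            exact marginalB ρ V W (by rw [← Matrix.star_eq_conjTranspose]; exact hVV) b
        _ = (Matrix.diagonal (RCLike.ofReal ∘ ν)) b b := by
            rw [show (Matrix.of fun y y' => ∑ x, ρ (x, y) (x, y')) = ρB from rfl,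
              show Wᴴ = star W from (Matrix.star_eq_conjTranspose W).symm, hW,
              ← Unitary.conjStarAlgAut_star_apply (S := ℂ),
              Matrix.IsHermitian.conjStarAlgAut_star_eigenvectorUnitary hBH]
        _ = ((ν b : ℝ) : ℂ) := by simp
    exact_mod_cast h
  -- traces of the reduced matrices
  have htrA : Matrix.trace ρA = 1 := by
    rw [← htr]
    simp [Matrix.trace, Matrix.diag, Fintype.sum_prod_type]
    rfl
  have htrB : Matrix.trace ρB = 1 := by
    rw [← htr]
    simp only [Matrix.trace, Matrix.diag, Fintype.sum_prod_type]
    exact Finset.sum_comm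
  have hpsum : ∑ i, p i = 1 := by
    have h := sum_eigenvalues_eq hρH
    rw [htr] at h
    exact_mod_cast h
  have hμsum : ∑ a, μ a = 1 := by
    have h := sum_eigenvalues_eq hAH
    rw [htrA] at h
    exact_mod_cast h
  have hνsum : ∑ b, ν b = 1 := by
    have h := sum_eigenvalues_eq hBH
    rw [htrB] at h
    exact_mod_cast h
  -- support condition
  have hsuppA : ∀ a, μ a = 0 → ∀ i b, c i (a, b) * p i = 0 := by
    intro a ha i b
    have h0 : ∑ b', s (a, b') = 0 := by rw [hmargA a, ha]
    have h1 : s (a, b) = 0 :=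
      (Finset.sum_eq_zero_iff_of_nonneg (fun b' _ => hsnn (a, b'))).mp h0 b (Finset.mem_univ _)
    exact (Finset.sum_eq_zero_iff_of_nonneg
      (fun i _ => mul_nonneg (hcnn i (a, b)) (hρ.eigenvalues_nonneg i))).mp h1 i
      (Finset.mem_univ _)
  have hsuppB : ∀ b, ν b = 0 → ∀ i a, c i (a, b) * p i = 0 := by
    intro b hb i a
    have h0 : ∑ a', s (a', b) = 0 := by rw [hmargB b, hb]
    have h1 : s (a, b) = 0 :=
      (Finset.sum_eq_zero_iff_of_nonneg (fun a' _ => hsnn (a', b))).mp h0 a (Finset.mem_univ _)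
    exact (Finset.sum_eq_zero_iff_of_nonneg
      (fun i _ => mul_nonneg (hcnn i (a, b)) (hρ.eigenvalues_nonneg i))).mp h1 i
      (Finset.mem_univ _)
  -- main inequality via Klein
  have main := klein_sum p (fun j : A × B => μ j.1 * ν j.2) c
      (fun j : A × B => Real.log (μ j.1) + Real.log (ν j.2)) hrow hcol hpsum
      (by
        rw [Fintype.sum_prod_type]
        simp_rw [← Finset.mul_sum, hνsum, mul_one]
        exact hμsum)
      (by
        intro i j
        exact log_term_ineq (hcnn i j) (hρ.eigenvalues_nonneg i)
          (hApsd.eigenvalues_nonneg j.1) (hBpsd.eigenvalues_nonneg j.2)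
          (by
            intro h0
            rcases mul_eq_zero.mp h0 with h | h
            · exact hsuppA j.1 h i j.2
            · exact hsuppB j.2 h i j.1))
  -- rewrite the LHS of `main`
  have hLHS : ∑ j : A × B, (∑ i, c i j * p i) * (Real.log (μ j.1) + Real.log (ν j.2))
      = (∑ a, μ a * Real.log (μ a)) + (∑ b, ν b * Real.log (ν b)) := by
    rw [Fintype.sum_prod_type]
    have step : ∀ a, ∑ b, (∑ i, c i (a, b) * p i) * (Real.log (μ a) + Real.log (ν b))
        = μ a * Real.log (μ a) + ∑ b, s (a, b) * Real.log (ν b) := by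
      intro a
      simp_rw [mul_add, Finset.sum_add_distrib]
      congr 1
      rw [← Finset.sum_mul]
      rw [show (∑ b, ∑ i, c i (a, b) * p i) = μ a from hmargA a]
    simp_rw [step, Finset.sum_add_distrib]
    congr 1
    rw [Finset.sum_comm]
    refine Finset.sum_congr rfl fun b _ => ?_
    rw [← Finset.sum_mul, hmargB b]
  rw [hLHS] at main
  -- unfold vN
  unfold vN
  rw [dif_pos hρH, dif_pos hAH, dif_pos hBH]
  have eq1 : ∑ i, hρH.eigenvalues i * Real.log (hρH.eigenvalues i)
      = ∑ i, p i * Real.log (p i) := rfl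
  linarith [main]
end
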